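/- Let d be a positive odd integer divisible by 3, let r be a positive odd integer, and let a and b be fixed integers with a ≡ 1 (mod 12) and b = 2^d * a - 3^r. If integers x, y, z satisfy a*x^d - y^2 - z^2 + x*y*z - b = 0, then x ≡ 5 (mod 12). -/

import Mathlib

/-!
Reducing the equation modulo 12 (where `a ≡ 1`, `x ^ d ≡ x ^ 3`, `2 ^ d ≡ 8`, `3 ^ r ≡ 3`) leaves a
cubic congruence whose only solutions have `x ≡ 5` or `x ≡ 9`. Modulo `x - 2` the equation becomes
`(y - z) ^ 2 ≡ 3 ^ r`, so with `r` odd the Jacobi symbol `(3 / |x - 2|)` equals `1`; but `x ≡ 9`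
gives `|x - 2| ≡ 5` or `7 (mod 12)`, where this symbol is `-1`.
-/

theorem pow_add_mul_eq_of_pow_add_eq {M : Type*} [Monoid M] {t : M} {m p : ℕ}
    (h : t ^ (m + p) = t ^ m) (k : ℕ) : t ^ (m + p * k) = t ^ m := by
  induction k with
  | zero => simp
  | succ k ih => rw [mul_add_one, ← add_assoc, pow_add, ih, ← pow_add, h]

theorem zmod12_pow_odd_of_three_le (t : ZMod 12) {k : ℕ} (hk : Odd k) (h3 : 3 ≤ k) :
    t ^ k = t ^ 3 := by
  obtain ⟨j, rfl⟩ : ∃ j, k = 3 + 2 * j := ⟨(k - 3) / 2, by obtain ⟨i, rfl⟩ := hk; omega⟩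
  exact pow_add_mul_eq_of_pow_add_eq (by revert t; decide) j

theorem zmod12_three_pow_odd {r : ℕ} (hr : Odd r) : (3 : ZMod 12) ^ r = 3 := by
  obtain ⟨j, rfl⟩ := hr
  simpa [add_comm] using pow_add_mul_eq_of_pow_add_eq (t := (3 : ZMod 12)) (m := 1) (p := 2)
    (by decide) j

theorem zmod12_eq_five_or_nine_of_cubic (X Y Z : ZMod 12)
    (h : X ^ 3 - Y ^ 2 - Z ^ 2 + X * Y * Z - 5 = 0) : X = 5 ∨ X = 9 := by
  revert X Y Z; decide

theorem emod_twelve_eq_five_or_nine {d r : ℕ} (hd : Odd d) (h3 : 3 ∣ d) (hr : Odd r)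
    {a x y z : ℤ} (ha : a % 12 = 1)
    (h : a * x ^ d - y ^ 2 - z ^ 2 + x * y * z - (2 ^ d * a - 3 ^ r) = 0) :
    x % 12 = 5 ∨ x % 12 = 9 := by
  have hd3 : 3 ≤ d := Nat.le_of_dvd hd.pos h3
  have ha' : (a : ZMod 12) = 1 := by
    simpa using (ZMod.intCast_eq_intCast_iff' a 1 12).2 (by simpa using ha)
  have h12 := congrArg (Int.cast : ℤ → ZMod 12) h
  push_cast at h12
  rw [ha', zmod12_pow_odd_of_three_le _ hd hd3, zmod12_pow_odd_of_three_le _ hd hd3,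
    zmod12_three_pow_odd hr] at h12
  have hx := zmod12_eq_five_or_nine_of_cubic x y z (by linear_combination h12)
  rcases hx with hx | hx
  · left; simpa using (ZMod.intCast_eq_intCast_iff' x 5 12).1 (by exact_mod_cast hx)
  · right; simpa using (ZMod.intCast_eq_intCast_iff' x 9 12).1 (by exact_mod_cast hx)

theorem sub_two_dvd_sq_sub {d : ℕ} {a c x y z : ℤ}
    (h : a * x ^ d - y ^ 2 - z ^ 2 + x * y * z - (2 ^ d * a - c) = 0) :
    x - 2 ∣ (y - z) ^ 2 - c := by
  obtain ⟨q, hq⟩ := sub_dvd_pow_sub_pow x 2 d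
  exact ⟨a * q + y * z, by linear_combination a * hq - h⟩

theorem jacobiSym_eq_one_of_dvd_sq_sub_pow {a w : ℤ} {N r : ℕ} (hr : Odd r) (ha : a.gcd N = 1)
    (h : (N : ℤ) ∣ w ^ 2 - a ^ r) : jacobiSym a N = 1 := by
  have hw : w.gcd N = 1 := by
    rw [← Int.isCoprime_iff_gcd_eq_one] at ha ⊢
    obtain ⟨k, hk⟩ := h
    rw [← IsCoprime.pow_left_iff two_pos, show w ^ 2 = a ^ r + N * k by linarith]
    exact ha.pow_left.add_mul_left_left k
  have hpow : jacobiSym a N ^ r = 1 := by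
    rw [← jacobiSym.pow_left, jacobiSym.mod_left' (Int.modEq_iff_dvd.2 h),
      jacobiSym.sq_one' hw]
  rcases jacobiSym.eq_one_or_neg_one ha with h1 | h1
  · exact h1
  · rw [h1, hr.neg_one_pow] at hpow
    norm_num at hpow

theorem jacobiSym_three_of_emod_twelve {N : ℕ} (hN : N % 12 = 5 ∨ N % 12 = 7) :
    jacobiSym 3 N = -1 := by
  have hodd : Odd N := Nat.odd_iff.2 (by omega)
  rw [show (3 : ℤ) = ((3 : ℕ) : ℤ) from rfl, jacobiSym.mod_right' 3 hodd]
  rcases hN with hN | hN <;> rw [hN] <;> norm_num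

theorem emod_twelve_ne_nine {d r : ℕ} (hr : Odd r) {a x y z : ℤ}
    (h : a * x ^ d - y ^ 2 - z ^ 2 + x * y * z - (2 ^ d * a - 3 ^ r) = 0) :
    x % 12 ≠ 9 := by
  intro hx
  set N := (x - 2).natAbs
  have hN : N % 12 = 5 ∨ N % 12 = 7 := by omega
  have h3N : (3 : ℤ).gcd N = 1 :=
    (Nat.Prime.coprime_iff_not_dvd Nat.prime_three).2 (by omega)
  have hJ := jacobiSym_eq_one_of_dvd_sq_sub_pow hr h3N (Int.natAbs_dvd.2 (sub_two_dvd_sq_sub h))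
  rw [jacobiSym_three_of_emod_twelve hN] at hJ
  norm_num at hJ

theorem solution_implies_x_five_mod_twelve_general (d : ℕ) (hodd : Odd d)
    (h3 : 3 ∣ d) (r : ℕ) (hrodd : Odd r)
    (a b : ℤ) (ha : a % 12 = 1) (hb : b = 2 ^ d * a - 3 ^ r)
    (x y z : ℤ) (h : a * x ^ d - y ^ 2 - z ^ 2 + x * y * z - b = 0) :
    x % 12 = 5 := by
  subst hb
  have h59 := emod_twelve_eq_five_or_nine hodd h3 hrodd ha h
  have h9 := emod_twelve_ne_nine hrodd h
  omega

/-- Let `d` be a positive odd integer divisible by `3`, `r` a positive odd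
integer, and `a`, `b` integers with `a ≡ 1 (mod 12)` and `b = 2^d * a - 3^r`.
If integers `x`, `y`, `z` satisfy `a*x^d - y² - z² + x*y*z - b = 0`, then
`x ≡ 5 (mod 12)`. -/
theorem solution_implies_x_five_mod_twelve (d : ℕ) (hd : 0 < d) (hodd : Odd d)
    (h3 : 3 ∣ d) (r : ℕ) (hr : 0 < r) (hrodd : Odd r)
    (a b : ℤ) (ha : a % 12 = 1) (hb : b = 2 ^ d * a - 3 ^ r)
    (x y z : ℤ) (h : a * x ^ d - y ^ 2 - z ^ 2 + x * y * z - b = 0) :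
    x % 12 = 5 :=
  solution_implies_x_five_mod_twelve_general d hodd h3 r hrodd a b ha hb x y z h
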